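/- arXiv:1401.7356 — 2 statements merged into one kernel-verified Lean document; each statement's English description precedes it below -/
import Mathlib

section
/- Let B be the group of transformations of ℂ[x,y] of the form (x,y) ↦ (ax + q(y), a⁻¹y + h) with a ∈ ℂ*, h ∈ ℂ, q ∈ ℂ[y], under composition. Then B is solvable of derived length 3: its derived subgroup B⁽¹⁾ consists of the transformations (x + p(y), y + f) with f ∈ ℂ, p ∈ ℂ[y]; its second derived subgroup B⁽²⁾ consists of (x + p(y), y) with p ∈ ℂ[y]; and B⁽²⁾ is abelian, with B/B⁽¹⁾ ≅ ℂ* and B⁽¹⁾/B⁽²⁾ ≅ ℂ. -/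
/-!
Write an element of `B` as `(x, y) ↦ (a x + q(y), a⁻¹ y + h)`. Reading off `a` is a homomorphism
onto `Kˣ`; on its kernel, the maps `(x + p(y), y + f)`, reading off `f` is a homomorphism onto `K`;
and its kernel, the shears `(x + p(y), y)`, is abelian. Since the targets are abelian, these give
the upper bounds for the derived subgroups. Conversely, the translation `(x, y + f)` is the
commutator of `(-x, -y)` with a translation, and the shear by `p(y + 1) - p(y)` is the commutator
of `(x, y - 1)` with the shear by `p`; in characteristic zero every polynomial is such a difference
(take combinations of Bernoulli polynomials), so all shears are commutators of unipotent elements.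
-/

open Polynomial Equiv
open scoped commutatorElement

theorem Polynomial.exists_comp_X_add_one_sub_eq {R : Type*} [CommRing R] [Algebra ℚ R]
    (Q : R[X]) : ∃ p : R[X], p.comp (X + 1) - p = Q := by
  induction Q using Polynomial.induction_on' with
  | add Q₁ Q₂ h₁ h₂ =>
    obtain ⟨p₁, rfl⟩ := h₁
    obtain ⟨p₂, rfl⟩ := h₂
    exact ⟨p₁ + p₂, by rw [add_comp]; ring⟩
  | monomial n c =>
    set B := (bernoulli (n + 1)).map (algebraMap ℚ R)
    have hB : B.comp (X + 1) - B = C (algebraMap ℚ R (n + 1)) * X ^ n := by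
      have h := congrArg (map (algebraMap ℚ R)) (bernoulli_comp_one_add_X (n + 1))
      simp only [map_comp, Polynomial.map_add, Polynomial.map_one, map_X] at h
      rw [add_comm X, h, add_sub_cancel_left]
      simp
    refine ⟨C (c * algebraMap ℚ R (n + 1)⁻¹) * B, ?_⟩
    have hn : algebraMap ℚ R (n + 1)⁻¹ * algebraMap ℚ R (n + 1) = 1 := by
      rw [← map_mul, inv_mul_cancel₀ (by positivity), map_one]
    rw [mul_comp, C_comp, ← mul_sub, hB, ← mul_assoc, ← C_mul, mul_assoc, hn, mul_one,
      C_mul_X_pow_eq_monomial]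

theorem commutatorElement_eq_iff_mul_eq {G : Type*} [Group G] {g h s : G} :
    ⁅g, h⁆ = s ↔ g * h = s * (h * g) := by
  rw [commutatorElement_def, mul_assoc (g * h), ← mul_inv_rev, mul_inv_eq_iff_eq_mul]

theorem Subgroup.commutator_subgroupOf {G : Type*} [Group G] {H A B : Subgroup G} (hA : A ≤ H)
    (hB : B ≤ H) : ⁅A.subgroupOf H, B.subgroupOf H⁆ = ⁅A, B⁆.subgroupOf H := by
  apply Subgroup.map_injective H.subtype_injective
  rw [Subgroup.map_commutator, Subgroup.map_subgroupOf_eq_of_le hA,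
    Subgroup.map_subgroupOf_eq_of_le hB, Subgroup.map_subgroupOf_eq_of_le]
  exact (Subgroup.commutator_mono hA hB).trans H.commutator_le_self

variable {K : Type*} [Field K]

def triangularMap (a : Kˣ) (q : K[X]) (h : K) : Perm (K × K) where
  toFun v := (a * v.1 + q.eval v.2, a⁻¹ * v.2 + h)
  invFun v := (a⁻¹ * (v.1 - q.eval (a * (v.2 - h))), a * (v.2 - h))
  left_inv v := by simp
  right_inv v := by simp

theorem triangularMap_apply (a : Kˣ) (q : K[X]) (h : K) (v : K × K) :
    triangularMap a q h v = (a * v.1 + q.eval v.2, a⁻¹ * v.2 + h) := rfl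

theorem eq_triangularMap_iff {σ : Perm (K × K)} {a : Kˣ} {q : K[X]} {h : K} :
    σ = triangularMap a q h ↔ ∀ v, σ v = (a * v.1 + q.eval v.2, a⁻¹ * v.2 + h) :=
  Equiv.ext_iff

theorem triangularMap_mul (a b : Kˣ) (q r : K[X]) (h k : K) :
    triangularMap a q h * triangularMap b r k =
      triangularMap (a * b) (C (a : K) * r + q.comp (C (b⁻¹ : K) * X + C k)) (a⁻¹ * k + h) := by
  ext v <;> simp [triangularMap_apply] <;> ring

theorem triangularMap_one : triangularMap (1 : Kˣ) 0 0 = 1 := by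
  ext v <;> simp [triangularMap_apply]

theorem triangularMap_inv (a : Kˣ) (q : K[X]) (h : K) :
    (triangularMap a q h)⁻¹ =
      triangularMap a⁻¹ (-(C (a⁻¹ : K) * q.comp (C (a : K) * X - C (a * h)))) (-(a * h)) := by
  refine inv_eq_of_mul_eq_one_right ?_
  rw [triangularMap_mul, ← triangularMap_one]
  congr 1
  · simp
  · rw [mul_neg, ← mul_assoc, ← C_mul]
    simp [sub_eq_add_neg]
  · simp

theorem commutatorElement_scaling_translation (c : Kˣ) (k : K) :
    ⁅triangularMap c 0 0, triangularMap 1 0 k⁆ = triangularMap 1 0 ((c⁻¹ - 1) * k) := by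
  rw [commutatorElement_eq_iff_mul_eq, triangularMap_mul, triangularMap_mul, triangularMap_mul]
  congr 1 <;> simp
  ring

theorem commutatorElement_translation_shear (p : K[X]) :
    ⁅triangularMap 1 0 (-1 : K), triangularMap 1 p 0⁆ =
      triangularMap 1 (p.comp (X + 1) - p) 0 := by
  rw [commutatorElement_eq_iff_mul_eq, triangularMap_mul, triangularMap_mul, triangularMap_mul]
  congr 1 <;> simp [sub_comp, comp_assoc]

variable (K) in
def triangularGroup : Subgroup (Perm (K × K)) where
  carrier := {σ | ∃ a q h, σ = triangularMap a q h}
  one_mem' := ⟨1, 0, 0, triangularMap_one.symm⟩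
  mul_mem' := by
    rintro _ _ ⟨a, q, h, rfl⟩ ⟨b, r, k, rfl⟩
    exact ⟨_, _, _, triangularMap_mul a b q r h k⟩
  inv_mem' := by
    rintro _ ⟨a, q, h, rfl⟩
    exact ⟨_, _, _, triangularMap_inv a q h⟩

variable (K) in
def unipotentTriangularGroup : Subgroup (Perm (K × K)) where
  carrier := {σ | ∃ q h, σ = triangularMap 1 q h}
  one_mem' := ⟨0, 0, triangularMap_one.symm⟩
  mul_mem' := by
    rintro _ _ ⟨q, h, rfl⟩ ⟨r, k, rfl⟩
    exact ⟨_, _, by rw [triangularMap_mul, one_mul]⟩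
  inv_mem' := by
    rintro _ ⟨q, h, rfl⟩
    exact ⟨_, _, by rw [triangularMap_inv, inv_one]⟩

variable (K) in
def shearGroup : Subgroup (Perm (K × K)) where
  carrier := {σ | ∃ q, σ = triangularMap 1 q 0}
  one_mem' := ⟨0, triangularMap_one.symm⟩
  mul_mem' := by
    rintro _ _ ⟨q, rfl⟩ ⟨r, rfl⟩
    exact ⟨r + q, by simp [triangularMap_mul]⟩
  inv_mem' := by
    rintro _ ⟨q, rfl⟩
    exact ⟨-q, by simp [triangularMap_inv]⟩

theorem unipotentTriangularGroup_le : unipotentTriangularGroup K ≤ triangularGroup K :=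
  fun _ ⟨q, h, hσ⟩ => ⟨1, q, h, hσ⟩

theorem shearGroup_le : shearGroup K ≤ unipotentTriangularGroup K :=
  fun _ ⟨q, hσ⟩ => ⟨q, 0, hσ⟩

theorem mem_triangularGroup_iff {σ : Perm (K × K)} : σ ∈ triangularGroup K ↔
    ∃ (a : K) (q : K[X]) (h : K), a ≠ 0 ∧ ∀ v, σ v = (a * v.1 + q.eval v.2, a⁻¹ * v.2 + h) := by
  simp only [triangularGroup, Subgroup.mem_mk, Submonoid.mem_mk, Subsemigroup.mem_mk,
    Set.mem_ofPred_eq, eq_triangularMap_iff, Units.val_inv_eq_inv_val]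
  constructor
  · rintro ⟨a, q, h, hσ⟩
    exact ⟨a, q, h, a.ne_zero, hσ⟩
  · rintro ⟨a, q, h, ha, hσ⟩
    exact ⟨Units.mk0 a ha, q, h, hσ⟩

theorem mem_unipotentTriangularGroup_iff {σ : Perm (K × K)} :
    σ ∈ unipotentTriangularGroup K ↔
      ∃ (p : K[X]) (f : K), ∀ v, σ v = (v.1 + p.eval v.2, v.2 + f) := by
  simp [unipotentTriangularGroup, eq_triangularMap_iff]

theorem mem_shearGroup_iff {σ : Perm (K × K)} :
    σ ∈ shearGroup K ↔ ∃ p : K[X], ∀ v, σ v = (v.1 + p.eval v.2, v.2) := by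
  simp [shearGroup, eq_triangularMap_iff]

theorem shearGroup_ne_bot : shearGroup K ≠ ⊥ := by
  intro h
  have hX : triangularMap 1 X 0 ∈ shearGroup K := ⟨X, rfl⟩
  rw [h, Subgroup.mem_bot] at hX
  simpa [triangularMap_apply] using congrArg (fun σ => (σ (0, 1)).1) hX

def scaleFactor (σ : Perm (K × K)) : K := (σ (1, 0)).1 - (σ (0, 0)).1

theorem scaleFactor_triangularMap (a : Kˣ) (q : K[X]) (h : K) :
    scaleFactor (triangularMap a q h) = a := by
  simp [scaleFactor, triangularMap_apply]

variable (K) in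
def scaleHom : triangularGroup K →* Kˣ :=
  MonoidHom.mk'
    (fun σ => Units.mk0 (scaleFactor σ) <| by
      obtain ⟨a, q, h, hσ⟩ := σ.2
      simp [hσ, scaleFactor_triangularMap])
    (by
      rintro ⟨_, a, q, h, rfl⟩ ⟨_, b, r, k, rfl⟩
      ext
      simp [triangularMap_mul, scaleFactor_triangularMap])

theorem scaleHom_surjective : Function.Surjective (scaleHom K) :=
  fun a => ⟨⟨triangularMap a 0 0, a, 0, 0, rfl⟩, Units.ext (scaleFactor_triangularMap a 0 0)⟩

theorem ker_scaleHom :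
    (scaleHom K).ker = (unipotentTriangularGroup K).subgroupOf (triangularGroup K) := by
  ext ⟨_, a, q, h, rfl⟩
  rw [MonoidHom.mem_ker, Subgroup.mem_subgroupOf, Units.ext_iff]
  change scaleFactor (triangularMap a q h) = 1 ↔ _
  rw [scaleFactor_triangularMap, Units.val_eq_one]
  constructor
  · rintro rfl
    exact ⟨q, h, rfl⟩
  · rintro ⟨p, f, hσ⟩
    simpa [scaleFactor_triangularMap] using congrArg scaleFactor hσ

def verticalShift (σ : Perm (K × K)) : K := (σ (0, 0)).2

theorem verticalShift_triangularMap (a : Kˣ) (q : K[X]) (h : K) :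
    verticalShift (triangularMap a q h) = h := by
  simp [verticalShift, triangularMap_apply]

variable (K) in
def verticalShiftHom : unipotentTriangularGroup K →* Multiplicative K :=
  MonoidHom.mk' (fun σ => .ofAdd (verticalShift σ)) <| by
    rintro ⟨_, q, h, rfl⟩ ⟨_, r, k, rfl⟩
    simp [triangularMap_mul, verticalShift_triangularMap, ← ofAdd_add, add_comm]

theorem verticalShiftHom_surjective : Function.Surjective (verticalShiftHom K) :=
  fun f => ⟨⟨triangularMap 1 0 f.toAdd, 0, _, rfl⟩, verticalShift_triangularMap 1 0 f.toAdd⟩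

theorem ker_verticalShiftHom :
    (verticalShiftHom K).ker = (shearGroup K).subgroupOf (unipotentTriangularGroup K) := by
  ext ⟨_, q, h, rfl⟩
  rw [MonoidHom.mem_ker, Subgroup.mem_subgroupOf]
  change Multiplicative.ofAdd (verticalShift (triangularMap 1 q h)) = 1 ↔ _
  rw [verticalShift_triangularMap, ofAdd_eq_one]
  constructor
  · rintro rfl
    exact ⟨q, rfl⟩
  · rintro ⟨p, hσ⟩
    simpa [verticalShift_triangularMap] using congrArg verticalShift hσ

theorem commutator_shearGroup : ⁅shearGroup K, shearGroup K⁆ = ⊥ := by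
  rw [eq_bot_iff, Subgroup.commutator_le]
  rintro _ ⟨p, rfl⟩ _ ⟨r, rfl⟩
  rw [Subgroup.mem_bot, commutatorElement_eq_one_iff_mul_comm]
  simp [triangularMap_mul, add_comm]

section CharZero

variable [CharZero K]

theorem commutator_unipotentTriangularGroup :
    ⁅unipotentTriangularGroup K, unipotentTriangularGroup K⁆ = shearGroup K := by
  apply le_antisymm
  · rw [← Subgroup.map_subtype_commutator, Subgroup.map_le_iff_le_comap, ← Subgroup.subgroupOf,
      ← ker_verticalShiftHom]
    exact Abelianization.commutator_subset_ker _
  · rintro _ ⟨Q, rfl⟩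
    obtain ⟨p, rfl⟩ := Q.exists_comp_X_add_one_sub_eq
    rw [← commutatorElement_translation_shear]
    exact Subgroup.commutator_mem_commutator ⟨0, -1, rfl⟩ ⟨p, 0, rfl⟩

theorem commutator_triangularGroup :
    ⁅triangularGroup K, triangularGroup K⁆ = unipotentTriangularGroup K := by
  apply le_antisymm
  · rw [← Subgroup.map_subtype_commutator, Subgroup.map_le_iff_le_comap, ← Subgroup.subgroupOf,
      ← ker_scaleHom]
    exact Abelianization.commutator_subset_ker _
  · rintro _ ⟨q, h, rfl⟩
    have hshear : triangularMap 1 q 0 ∈ ⁅triangularGroup K, triangularGroup K⁆ :=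
      Subgroup.commutator_mono unipotentTriangularGroup_le unipotentTriangularGroup_le
        (commutator_unipotentTriangularGroup.ge ⟨q, rfl⟩)
    have htranslation : triangularMap 1 0 h ∈ ⁅triangularGroup K, triangularGroup K⁆ := by
      have hh : (((-1 : Kˣ)⁻¹ : Kˣ) - 1 : K) * (-h / 2) = h := by
        push_cast
        ring
      rw [← hh, ← commutatorElement_scaling_translation]
      exact Subgroup.commutator_mem_commutator ⟨-1, 0, 0, rfl⟩ ⟨1, 0, _, rfl⟩
    convert Subgroup.mul_mem _ htranslation hshear using 1
    simp [triangularMap_mul]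

variable (K)

theorem derivedSeries_triangularGroup_one :
    derivedSeries (triangularGroup K) 1 =
      (unipotentTriangularGroup K).subgroupOf (triangularGroup K) := by
  rw [derivedSeries_succ, derivedSeries_zero, ← Subgroup.subgroupOf_self,
    Subgroup.commutator_subgroupOf le_rfl le_rfl, commutator_triangularGroup]

theorem derivedSeries_triangularGroup_two :
    derivedSeries (triangularGroup K) 2 = (shearGroup K).subgroupOf (triangularGroup K) := by
  rw [derivedSeries_succ, derivedSeries_triangularGroup_one,
    Subgroup.commutator_subgroupOf unipotentTriangularGroup_le unipotentTriangularGroup_le,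
    commutator_unipotentTriangularGroup]

theorem derivedSeries_triangularGroup_two_ne_bot : derivedSeries (triangularGroup K) 2 ≠ ⊥ := by
  rw [derivedSeries_triangularGroup_two, Ne, Subgroup.subgroupOf_eq_bot,
    disjoint_of_le_iff_left_eq_bot (shearGroup_le.trans unipotentTriangularGroup_le)]
  exact shearGroup_ne_bot

theorem derivedSeries_triangularGroup_three : derivedSeries (triangularGroup K) 3 = ⊥ := by
  have hle := (shearGroup_le (K := K)).trans unipotentTriangularGroup_le
  rw [derivedSeries_succ, derivedSeries_triangularGroup_two,
    Subgroup.commutator_subgroupOf hle hle, commutator_shearGroup, Subgroup.bot_subgroupOf]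

end CharZero

/-- The group `B` of triangular transformations
`(x,y) ↦ (ax + q(y), a⁻¹y + h)` (realized as permutations of `ℂ × ℂ`) is
solvable of derived length 3, with `B⁽¹⁾` the maps `(x + p(y), y + f)`,
`B⁽²⁾` the maps `(x + p(y), y)` (which is abelian), `B/B⁽¹⁾ ≅ ℂ*` and
`B⁽¹⁾/B⁽²⁾ ≅ ℂ`. -/
theorem triangular_group_derived_series
    (B : Subgroup (Equiv.Perm (ℂ × ℂ)))
    (hB : ∀ σ : Equiv.Perm (ℂ × ℂ), σ ∈ B ↔
      ∃ (a : ℂ) (q : ℂ[X]) (h : ℂ), a ≠ 0 ∧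
        ∀ v : ℂ × ℂ, σ v = (a * v.1 + q.eval v.2, a⁻¹ * v.2 + h)) :
    IsSolvable ↥B ∧
    derivedSeries ↥B 3 = ⊥ ∧
    derivedSeries ↥B 2 ≠ ⊥ ∧
    (∀ σ : ↥B, σ ∈ derivedSeries ↥B 1 ↔
      ∃ (p : ℂ[X]) (f : ℂ), ∀ v : ℂ × ℂ,
        (σ : Equiv.Perm (ℂ × ℂ)) v = (v.1 + p.eval v.2, v.2 + f)) ∧
    (∀ σ : ↥B, σ ∈ derivedSeries ↥B 2 ↔
      ∃ p : ℂ[X], ∀ v : ℂ × ℂ,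
        (σ : Equiv.Perm (ℂ × ℂ)) v = (v.1 + p.eval v.2, v.2)) ∧
    (∀ σ τ : ↥B, σ ∈ derivedSeries ↥B 2 → τ ∈ derivedSeries ↥B 2 → Commute σ τ) ∧
    (∃ φ : ↥B →* ℂˣ, Function.Surjective φ ∧ φ.ker = derivedSeries ↥B 1) ∧
    (∃ ψ : ↥(derivedSeries ↥B 1) →* Multiplicative ℂ, Function.Surjective ψ ∧
      ψ.ker = (derivedSeries ↥B 2).subgroupOf (derivedSeries ↥B 1)) := by
  obtain rfl : B = triangularGroup ℂ :=
    Subgroup.ext fun σ => (hB σ).trans mem_triangularGroup_iff.symm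
  have h3 := derivedSeries_triangularGroup_three ℂ
  refine ⟨⟨⟨3, h3⟩⟩, h3, derivedSeries_triangularGroup_two_ne_bot ℂ, fun σ => ?_, fun σ => ?_,
    fun σ τ hσ hτ => ?_, ⟨scaleHom ℂ, scaleHom_surjective, ?_⟩, ?_⟩
  · rw [derivedSeries_triangularGroup_one]
    exact mem_unipotentTriangularGroup_iff
  · rw [derivedSeries_triangularGroup_two]
    exact mem_shearGroup_iff
  · rw [← commutatorElement_eq_one_iff_commute, ← Subgroup.mem_bot, ← h3, derivedSeries_succ]
    exact Subgroup.commutator_mem_commutator hσ hτ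
  · rw [ker_scaleHom, derivedSeries_triangularGroup_one]
  · rw [derivedSeries_triangularGroup_two, derivedSeries_triangularGroup_one]
    refine ⟨(verticalShiftHom ℂ).comp
      (Subgroup.subgroupOfEquivOfLe unipotentTriangularGroup_le).toMonoidHom,
      verticalShiftHom_surjective.comp (MulEquiv.surjective _), ?_⟩
    rw [← MonoidHom.comap_ker, ker_verticalShiftHom]
    ext σ
    simp [Subgroup.mem_subgroupOf]
end

section
/- Let B be the group of transformations (x,y) ↦ (ax + q(y), a⁻¹y + h), a ∈ ℂ*, h ∈ ℂ, q ∈ ℂ[y]. Then B contains no proper subgroup of finite index. -/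
open Polynomial

/-- The triangular transformation as a permutation. -/
noncomputable def Te (a : ℂ) (ha : a ≠ 0) (q : ℂ[X]) (h : ℂ) : Equiv.Perm (ℂ × ℂ) where
  toFun v := (a * v.1 + q.eval v.2, a⁻¹ * v.2 + h)
  invFun v := (a⁻¹ * (v.1 - q.eval (a * (v.2 - h))), a * (v.2 - h))
  left_inv v := by
    obtain ⟨x, y⟩ := v
    have h2 : a * (a⁻¹ * y + h - h) = y := by
      rw [add_sub_cancel_right, mul_inv_cancel_left₀ ha]
    refine Prod.ext ?_ h2
    show a⁻¹ * (a * x + q.eval y - q.eval (a * (a⁻¹ * y + h - h))) = x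
    rw [h2, add_sub_cancel_right, inv_mul_cancel_left₀ ha]
  right_inv v := by
    obtain ⟨x, y⟩ := v
    refine Prod.ext ?_ ?_
    · show a * (a⁻¹ * (x - q.eval (a * (y - h)))) + q.eval (a * (y - h)) = x
      rw [mul_inv_cancel_left₀ ha, sub_add_cancel]
    · show a⁻¹ * (a * (y - h)) + h = y
      rw [inv_mul_cancel_left₀ ha, sub_add_cancel]

@[simp] lemma Te_apply (a : ℂ) (ha : a ≠ 0) (q : ℂ[X]) (h : ℂ) (v : ℂ × ℂ) :
    Te a ha q h v = (a * v.1 + q.eval v.2, a⁻¹ * v.2 + h) := rfl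

lemma Te_congr {a a' : ℂ} {q q' : ℂ[X]} {h h' : ℂ} (ha : a ≠ 0) (ha' : a' ≠ 0)
    (e1 : a = a') (e2 : q = q') (e3 : h = h') : Te a ha q h = Te a' ha' q' h' := by
  subst e1; subst e2; subst e3; rfl

lemma Te_pow_a (b : ℂ) (hb : b ≠ 0) (n : ℕ) :
    (Te b hb 0 0) ^ n = Te (b ^ n) (pow_ne_zero n hb) 0 0 := by
  induction n with
  | zero => ext v <;> simp [Te_apply]
  | succ n ih =>
    ext v <;>
      simp [pow_succ, Equiv.Perm.mul_apply, ih, Te_apply, mul_inv, mul_assoc,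
        mul_comm, mul_left_comm]

lemma Te_pow_q (q : ℂ[X]) (n : ℕ) :
    (Te 1 one_ne_zero q 0) ^ n = Te 1 one_ne_zero (n • q) 0 := by
  induction n with
  | zero => ext v <;> simp [Te_apply]
  | succ n ih =>
    ext v
    · simp [pow_succ, Equiv.Perm.mul_apply, ih, Te_apply, add_smul]; ring
    · simp [pow_succ, Equiv.Perm.mul_apply, ih, Te_apply]

lemma Te_pow_h (h : ℂ) (n : ℕ) :
    (Te 1 one_ne_zero 0 h) ^ n = Te 1 one_ne_zero 0 (n * h) := by
  induction n with
  | zero => ext v <;> simp [Te_apply]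
  | succ n ih =>
    ext v
    · simp [pow_succ, Equiv.Perm.mul_apply, ih, Te_apply]
    · simp [pow_succ, Equiv.Perm.mul_apply, ih, Te_apply]; ring

/-- The group `B` of triangular transformations
`(x,y) ↦ (ax + q(y), a⁻¹y + h)` contains no proper subgroup of finite index. -/
theorem triangular_group_no_proper_finite_index
    (B : Subgroup (Equiv.Perm (ℂ × ℂ)))
    (hB : ∀ σ : Equiv.Perm (ℂ × ℂ), σ ∈ B ↔
      ∃ (a : ℂ) (q : ℂ[X]) (h : ℂ), a ≠ 0 ∧
        ∀ v : ℂ × ℂ, σ v = (a * v.1 + q.eval v.2, a⁻¹ * v.2 + h)) :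
    ∀ H : Subgroup ↥B, H.index ≠ 0 → H = ⊤ := by
  have memTe : ∀ (a : ℂ) (ha : a ≠ 0) (q : ℂ[X]) (h : ℂ), Te a ha q h ∈ B := by
    intro a ha q h
    exact (hB _).mpr ⟨a, q, h, ha, fun v => rfl⟩
  intro H hH
  haveI : H.FiniteIndex := ⟨hH⟩
  set N := H.normalCore with hN
  haveI hNnorm : N.Normal := Subgroup.normalCore_normal H
  haveI : N.FiniteIndex := inferInstance
  set m := N.index with hm
  have hm0 : m ≠ 0 := Subgroup.FiniteIndex.index_ne_zero
  have hmC : (m : ℂ) ≠ 0 := by exact_mod_cast hm0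
  have key : ∀ g : ↥B, g ∈ N := by
    intro g
    obtain ⟨a, q, h, ha, hg⟩ := (hB (g : Equiv.Perm (ℂ × ℂ))).mp g.2
    set q' : ℂ[X] := C a⁻¹ * (q.comp (X - C (a * h))) with hq'
    have hq'eval : ∀ t : ℂ, q'.eval t = a⁻¹ * q.eval (t - a * h) := by
      intro t; simp [hq', eval_mul, eval_comp]
    have hdecomp : (g : Equiv.Perm (ℂ × ℂ)) =
        Te a ha 0 0 * Te 1 one_ne_zero q' 0 * Te 1 one_ne_zero 0 (a * h) := by
      ext v
      · simp only [Equiv.Perm.mul_apply, Te_apply, hg v, hq'eval, eval_zero]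
        field_simp
        ring
      · simp only [Equiv.Perm.mul_apply, Te_apply, hg v, eval_zero]
        field_simp
        ring
    obtain ⟨b, hbne, hb⟩ : ∃ b : ℂ, b ≠ 0 ∧ b ^ m = a := by
      refine ⟨Complex.exp (Complex.log a / m), Complex.exp_ne_zero _, ?_⟩
      rw [← Complex.exp_nat_mul, mul_div_cancel₀ _ hmC]
      exact Complex.exp_log ha
    have hqroot : m • ((m : ℂ)⁻¹ • q') = q' := by
      rw [← Nat.cast_smul_eq_nsmul ℂ, smul_smul, mul_inv_cancel₀ hmC, one_smul]
    have hhroot : (m : ℂ) * ((a * h) / m) = a * h := by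
      rw [mul_comm, div_mul_cancel₀ _ hmC]
    have e1 : (⟨Te a ha 0 0, memTe a ha 0 0⟩ : ↥B) ∈ N := by
      have : (⟨Te a ha 0 0, memTe a ha 0 0⟩ : ↥B)
          = (⟨Te b hbne 0 0, memTe b hbne 0 0⟩ : ↥B) ^ m := by
        ext1
        push_cast [Te_pow_a b hbne m]
        exact Te_congr _ _ hb.symm rfl rfl
      rw [this]
      exact Subgroup.pow_index_mem N _
    have e2 : (⟨Te 1 one_ne_zero q' 0, memTe 1 one_ne_zero q' 0⟩ : ↥B) ∈ N := by
      have : (⟨Te 1 one_ne_zero q' 0, memTe 1 one_ne_zero q' 0⟩ : ↥B)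
          = (⟨Te 1 one_ne_zero ((m : ℂ)⁻¹ • q') 0, memTe 1 one_ne_zero _ 0⟩ : ↥B) ^ m := by
        ext1
        push_cast [Te_pow_q ((m : ℂ)⁻¹ • q') m]
        exact Te_congr _ _ rfl hqroot.symm rfl
      rw [this]
      exact Subgroup.pow_index_mem N _
    have e3 : (⟨Te 1 one_ne_zero 0 (a * h), memTe 1 one_ne_zero 0 (a * h)⟩ : ↥B) ∈ N := by
      have : (⟨Te 1 one_ne_zero 0 (a * h), memTe 1 one_ne_zero 0 (a * h)⟩ : ↥B)
          = (⟨Te 1 one_ne_zero 0 ((a * h) / m), memTe 1 one_ne_zero 0 _⟩ : ↥B) ^ m := by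
        ext1
        push_cast [Te_pow_h ((a * h) / m) m]
        exact Te_congr _ _ rfl rfl hhroot.symm
      rw [this]
      exact Subgroup.pow_index_mem N _
    have hgdec : g = (⟨Te a ha 0 0, memTe a ha 0 0⟩ : ↥B)
        * (⟨Te 1 one_ne_zero q' 0, memTe 1 one_ne_zero q' 0⟩ : ↥B)
        * (⟨Te 1 one_ne_zero 0 (a * h), memTe 1 one_ne_zero 0 (a * h)⟩ : ↥B) := by
      ext1
      push_cast
      exact hdecomp
    rw [hgdec]
    exact N.mul_mem (N.mul_mem e1 e2) e3
  have hNtop : N = ⊤ := by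
    rw [Subgroup.eq_top_iff']
    exact key
  have htop : (⊤ : Subgroup ↥B) ≤ H := by
    rw [← hNtop]; exact H.normalCore_le
  exact top_le_iff.mp htop
end
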